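/- Given weight constraint programs P and Q over a common language, let or(P,Q) be obtained by adding fresh atoms p and q, adding p to the body of each rule of P and q to the body of each rule of Q, and adding the rule 1 ≤ {p = 1, q = 1} ≤ 1. Then or(P,Q) has an answer set if and only if at least one of P and Q has an answer set. -/

import Mathlib

open scoped Classical

inductive Lit where
  | pos : ℕ → Lit
  | neg : ℕ → Lit
deriving DecidableEq

/-- A set of literals is consistent if it contains no complementary pair. -/
def Consistent (X : Set Lit) : Prop :=
  ∀ a : ℕ, ¬ (Lit.pos a ∈ X ∧ Lit.neg a ∈ X)

/-- A rule element: a literal or a literal prefixed with `not`. -/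
inductive RElem where
  | pos : Lit → RElem
  | neg : Lit → RElem
deriving DecidableEq

def SatRE (X : Set Lit) : RElem → Prop
  | RElem.pos l => l ∈ X
  | RElem.neg l => l ∉ X

/-- The literal of a rule element. -/
def reLit : RElem → Lit
  | RElem.pos l => l
  | RElem.neg l => l

/-- A weight constraint L ≤ S ≤ U, where S is a (multi)set of weight assignments
e = w (rule element, weight) and L, U are reals or ±∞. -/
structure WC where
  lb : EReal
  S : Multiset (RElem × ℝ)
  ub : EReal

/-- v(S,X): the sum of the weights of the assignments whose rule element X satisfies. -/
noncomputable def wval (X : Set Lit) (S : Multiset (RElem × ℝ)) : ℝ :=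
  ((S.filter fun p => SatRE X p.1).map Prod.snd).sum

def SatWC (X : Set Lit) (C : WC) : Prop :=
  C.lb ≤ (wval X C.S : EReal) ∧ (wval X C.S : EReal) ≤ C.ub

/-- A WCP rule C0 ← C1,...,Cn. -/
structure WRule where
  head : WC
  body : List WC

abbrev WProg := Set WRule

def isPosRE (p : RElem × ℝ) : Prop := ∃ l : Lit, p.1 = RElem.pos l

/-- In a weight constraint program, heads contain no negative rule elements. -/
def HeadPos (P : WProg) : Prop := ∀ r ∈ P, ∀ p ∈ r.head.S, isPosRE p

def SatWRule (X : Set Lit) (r : WRule) : Prop :=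
  (∀ C ∈ r.body, SatWC X C) → SatWC X r.head

def SatWProg (X : Set Lit) (P : WProg) : Prop := ∀ r ∈ P, SatWRule X r

/-- The reduct (L ≤ S)^X = L − v(S∖S', X) ≤ S', where S' is the positive part of S. -/
noncomputable def RedLS (X : Set Lit) (C : WC) : WC :=
  ⟨C.lb - (wval X (C.S.filter fun p => ¬ isPosRE p) : EReal),
    C.S.filter isPosRE, ⊤⟩

/-- The weight constraint 1 ≤ {l = 1}, representing the literal l. -/
noncomputable def litWC (l : Lit) : WC := ⟨(1 : EReal), {(RElem.pos l, (1 : ℝ))}, ⊤⟩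

/-- The weight constraint 1 ≤ {not l = 1}, representing `not l`. -/
noncomputable def notWC (l : Lit) : WC := ⟨(1 : EReal), {(RElem.neg l, (1 : ℝ))}, ⊤⟩

/-- ⊥, i.e. the weight constraint 1 ≤ {}. -/
noncomputable def botWC : WC := ⟨(1 : EReal), 0, ⊤⟩

/-- The reduct of a WCP rule with respect to X: all rules e ← (L1 ≤ S1)^X,...,(Ln ≤ Sn)^X
for head literals e with X ⊨ e and X ⊨ Si ≤ Ui for all i. -/
noncomputable def WReductRule (X : Set Lit) (r : WRule) : WProg :=
  {r' | ∃ l : Lit, (∃ w : ℝ, (RElem.pos l, w) ∈ r.head.S) ∧ l ∈ X ∧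
    (∀ C ∈ r.body, (wval X C.S : EReal) ≤ C.ub) ∧
    r' = ⟨litWC l, r.body.map (RedLS X)⟩}

noncomputable def WReductProg (X : Set Lit) (P : WProg) : WProg :=
  {r' | ∃ r ∈ P, r' ∈ WReductRule X r}

/-- X is an answer set for P if X ⊨ P and no proper subset of X satisfies P^X. -/
def AnswerSetW (X : Set Lit) (P : WProg) : Prop :=
  Consistent X ∧ SatWProg X P ∧
    ∀ Z : Set Lit, Z ⊂ X → ¬ SatWProg Z (WReductProg X P)

def SEModelW (P : WProg) (X Y : Set Lit) : Prop :=
  Consistent X ∧ Consistent Y ∧ X ⊆ Y ∧ SatWProg Y P ∧ SatWProg X (WReductProg Y P)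

def StrongEqW (P Q : WProg) : Prop :=
  ∀ R : WProg, HeadPos R →
    ∀ Y : Set Lit, AnswerSetW Y (P ∪ R) ↔ AnswerSetW Y (Q ∪ R)

/-- A weight constraint program is ¬-free if classical negation occurs nowhere in it. -/
def WProgNegFree (P : WProg) : Prop :=
  ∀ r ∈ P, (∀ p ∈ r.head.S, ∃ a : ℕ, reLit p.1 = Lit.pos a) ∧
    ∀ C ∈ r.body, ∀ p ∈ C.S, ∃ a : ℕ, reLit p.1 = Lit.pos a

def AtomsOnly (Z : Set Lit) : Prop := ∀ l ∈ Z, ∃ a, l = Lit.pos a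

/-- Add the atom a to the body of a rule. -/
noncomputable def addBody (a : ℕ) (r : WRule) : WRule := ⟨r.head, litWC (Lit.pos a) :: r.body⟩

/-- or(P,Q): add p to each body of P, q to each body of Q, plus 1 ≤ {p=1, q=1} ≤ 1. -/
def orProg (P Q : WProg) (p q : ℕ) : WProg :=
  (addBody p '' P) ∪ (addBody q '' Q) ∪
    {⟨⟨(1 : EReal), {(RElem.pos (Lit.pos p), (1 : ℝ)), (RElem.pos (Lit.pos q), (1 : ℝ))},
       (1 : EReal)⟩, []⟩}

/-- Atoms occurring in a WCP rule. -/
def wruleAtoms (r : WRule) : Set ℕ :=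
  {a | (∃ pr ∈ r.head.S, reLit pr.1 = Lit.pos a ∨ reLit pr.1 = Lit.neg a) ∨
    ∃ C ∈ r.body, ∃ pr ∈ C.S, reLit pr.1 = Lit.pos a ∨ reLit pr.1 = Lit.neg a}

/-! The rule `1 ≤ {p = 1, q = 1} ≤ 1` puts exactly one of the fresh atoms, say `p`, into an
answer set `Y` of `or(P,Q)`, and then every rule coming from `Q` has a false body. Since `p` does
not occur in `P`, neither satisfaction of `P` nor its reduct notices `p`, so `Y ↦ Y \ {p}` and
`X ↦ insert p X` match the answer sets of `or(P,Q)` containing `p` with the answer sets of `P`. -/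

open Set

lemma wval_congr {X X' : Set Lit} {S : Multiset (RElem × ℝ)}
    (h : ∀ e ∈ S, reLit e.1 ∈ X ↔ reLit e.1 ∈ X') : wval X S = wval X' S := by
  unfold wval
  congr 2
  refine Multiset.filter_congr fun e he => ?_
  rcases e with ⟨l | l, w⟩
  · exact h _ he
  · exact not_congr (h _ he)

lemma wval_singleton (X : Set Lit) (e : RElem) (w : ℝ) :
    wval X {(e, w)} = if SatRE X e then w else 0 := by
  by_cases he : SatRE X e <;> simp [wval, Multiset.filter_singleton, he]

lemma wval_cons (X : Set Lit) (e : RElem × ℝ) (S : Multiset (RElem × ℝ)) :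
    wval X (e ::ₘ S) = (if SatRE X e.1 then e.2 else 0) + wval X S := by
  by_cases he : SatRE X e.1 <;> simp [wval, he]

lemma satWC_congr {X X' : Set Lit} {C : WC} (h : ∀ e ∈ C.S, reLit e.1 ∈ X ↔ reLit e.1 ∈ X') :
    SatWC X C ↔ SatWC X' C := by
  rw [SatWC, SatWC, wval_congr h]

lemma redLS_congr {X X' : Set Lit} {C : WC} (h : ∀ e ∈ C.S, reLit e.1 ∈ X ↔ reLit e.1 ∈ X') :
    RedLS X C = RedLS X' C := by
  rw [RedLS, RedLS, wval_congr fun e he => h e (Multiset.mem_filter.1 he).1]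

lemma satWC_litWC {X : Set Lit} {l : Lit} : SatWC X (litWC l) ↔ l ∈ X := by
  by_cases hl : l ∈ X <;> simp [SatWC, litWC, wval_singleton, SatRE, hl]

lemma redLS_litWC (X : Set Lit) (l : Lit) : RedLS X (litWC l) = litWC l := by
  simp [RedLS, litWC, isPosRE, wval, Multiset.filter_singleton]

def WRule.Avoids (r : WRule) (l : Lit) : Prop :=
  (∀ e ∈ r.head.S, reLit e.1 ≠ l) ∧ ∀ C ∈ r.body, ∀ e ∈ C.S, reLit e.1 ≠ l

lemma WRule.avoids_of_not_mem_wruleAtoms {r : WRule} {a : ℕ} (h : a ∉ wruleAtoms r) :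
    r.Avoids (Lit.pos a) ∧ r.Avoids (Lit.neg a) := by
  simp only [wruleAtoms, Set.mem_ofPred_eq, not_or] at h
  unfold WRule.Avoids
  grind

lemma Set.mem_iff_mem_of_sdiff_singleton_eq {α : Type*} {s t : Set α} {a b : α}
    (h : s \ {a} = t \ {a}) (hb : b ≠ a) : b ∈ s ↔ b ∈ t := by
  simpa [hb] using congrArg (b ∈ ·) h

lemma Set.forall_ssubset_sdiff_singleton_iff {α : Type*} {s : Set α} {a : α} (ha : a ∈ s)
    {R : Set α → Prop} : (∀ t ⊂ s, a ∈ t → R (t \ {a})) ↔ ∀ u ⊂ s \ {a}, R u := by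
  constructor
  · intro h u hu
    have hau : a ∉ u := fun h' => (hu.1 h').2 rfl
    simpa [Set.insert_sdiff_self_of_notMem hau] using h (insert a u) (by grind) (mem_insert a u)
  · intro h t ht hat
    obtain ⟨b, hbs, hbt⟩ := exists_of_ssubset ht
    have hba : b ≠ a := fun hb => hbt (hb ▸ hat)
    exact h _ ((ssubset_iff_of_subset (sdiff_subset_sdiff_left ht.1)).2
      ⟨b, ⟨hbs, hba⟩, fun hb => hbt hb.1⟩)

section Freshness

variable {X X' : Set Lit} {l₀ : Lit} {r : WRule} {P : WProg}

lemma satWRule_congr (hr : r.Avoids l₀) (hX : X \ {l₀} = X' \ {l₀}) :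
    SatWRule X r ↔ SatWRule X' r := by
  have hagree (e : RElem × ℝ) (he : reLit e.1 ≠ l₀) : reLit e.1 ∈ X ↔ reLit e.1 ∈ X' :=
    mem_iff_mem_of_sdiff_singleton_eq hX he
  refine imp_congr (forall₂_congr fun C hC => satWC_congr fun e he => ?_)
    (satWC_congr fun e he => hagree e (hr.1 e he))
  exact hagree e (hr.2 C hC e he)

lemma wReductRule_congr (hr : r.Avoids l₀) (hX : X \ {l₀} = X' \ {l₀}) :
    WReductRule X r = WReductRule X' r := by
  have hbody : ∀ C ∈ r.body, ∀ e ∈ C.S, reLit e.1 ∈ X ↔ reLit e.1 ∈ X' :=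
    fun C hC e he => mem_iff_mem_of_sdiff_singleton_eq hX (hr.2 C hC e he)
  have hmap : r.body.map (RedLS X) = r.body.map (RedLS X') :=
    List.map_congr_left fun C hC => redLS_congr (hbody C hC)
  ext r'
  simp only [WReductRule, mem_ofPred_eq, hmap]
  refine exists_congr fun l => and_congr_right fun ⟨w, hw⟩ => and_congr
    (mem_iff_mem_of_sdiff_singleton_eq hX (hr.1 _ hw)) (and_congr_left fun _ => ?_)
  exact forall₂_congr fun C hC => by rw [wval_congr (hbody C hC)]

lemma avoids_of_mem_wReductRule (hr : r.Avoids l₀) {r' : WRule}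
    (hr' : r' ∈ WReductRule X r) : r'.Avoids l₀ := by
  obtain ⟨l, ⟨w, hw⟩, -, -, rfl⟩ := hr'
  constructor
  · simpa [litWC, reLit] using hr.1 _ hw
  · simp only [List.mem_map]
    rintro _ ⟨C, hC, rfl⟩ e he
    exact hr.2 C hC e (Multiset.mem_filter.1 he).1

variable (hP : ∀ r ∈ P, r.Avoids l₀)
include hP

lemma satWProg_congr (hX : X \ {l₀} = X' \ {l₀}) : SatWProg X P ↔ SatWProg X' P :=
  forall₂_congr fun r hr => satWRule_congr (hP r hr) hX

lemma satWProg_wReductProg_congr {Y Y' : Set Lit} (hX : X \ {l₀} = X' \ {l₀})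
    (hY : Y \ {l₀} = Y' \ {l₀}) :
    SatWProg X (WReductProg Y P) ↔ SatWProg X' (WReductProg Y' P) := by
  have hred : WReductProg Y P = WReductProg Y' P := by
    ext r'
    exact exists_congr fun r => and_congr_right fun hr => by rw [wReductRule_congr (hP r hr) hY]
  rw [← hred]
  refine forall₂_congr fun r' ⟨r, hr, hr'⟩ => satWRule_congr ?_ hX
  exact avoids_of_mem_wReductRule (hP r hr) hr'

end Freshness

lemma not_mem_of_answerSetW {P : WProg} {X : Set Lit} {l₀ : Lit} (hX : AnswerSetW X P)
    (hP : ∀ r ∈ P, ∀ e ∈ r.head.S, reLit e.1 ≠ l₀) : l₀ ∉ X := by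
  intro hl₀
  refine hX.2.2 (X \ {l₀}) (sdiff_singleton_ssubset.2 hl₀) ?_
  rintro _ ⟨r, hr, l, ⟨w, hw⟩, hlX, -, rfl⟩ -
  exact satWC_litWC.2 ⟨hlX, by simpa [reLit] using hP r hr _ hw⟩

section ProgramOperations

variable {X Z : Set Lit} {P Q : WProg} {r : WRule} {a : ℕ}

lemma satWProg_union : SatWProg X (P ∪ Q) ↔ SatWProg X P ∧ SatWProg X Q :=
  forall₂_or_left

lemma satWProg_singleton : SatWProg X {r} ↔ SatWRule X r := by
  simp [SatWProg]

lemma wReductProg_union : WReductProg X (P ∪ Q) = WReductProg X P ∪ WReductProg X Q := by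
  ext r'
  simp only [WReductProg, mem_ofPred_eq, mem_union, or_and_right, exists_or]

lemma wReductProg_singleton : WReductProg X {r} = WReductRule X r := by
  ext r'
  simp [WReductProg]

lemma satWRule_addBody : SatWRule X (addBody a r) ↔ (Lit.pos a ∈ X → SatWRule X r) := by
  simp only [SatWRule, addBody, List.mem_cons, forall_eq_or_imp, satWC_litWC]
  tauto

lemma satWProg_image_addBody :
    SatWProg X (addBody a '' P) ↔ (Lit.pos a ∈ X → SatWProg X P) := by
  simp only [SatWProg, forall_mem_image, satWRule_addBody]
  tauto

lemma wReductRule_addBody : WReductRule X (addBody a r) = addBody a '' WReductRule X r := by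
  ext r'
  simp only [WReductRule, addBody, mem_ofPred_eq, mem_image, List.mem_cons, forall_eq_or_imp,
    List.map_cons, redLS_litWC]
  constructor
  · rintro ⟨l, hw, hl, ⟨-, hub⟩, rfl⟩
    exact ⟨_, ⟨l, hw, hl, hub, rfl⟩, rfl⟩
  · rintro ⟨_, ⟨l, hw, hl, hub, rfl⟩, rfl⟩
    exact ⟨l, hw, hl, ⟨le_top, hub⟩, rfl⟩

lemma wReductProg_image_addBody :
    WReductProg X (addBody a '' P) = addBody a '' WReductProg X P := by
  ext r'
  constructor
  · rintro ⟨_, ⟨r, hr, rfl⟩, hr'⟩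
    rw [wReductRule_addBody] at hr'
    obtain ⟨r'', hr'', rfl⟩ := hr'
    exact ⟨r'', ⟨r, hr, hr''⟩, rfl⟩
  · rintro ⟨r'', ⟨r, hr, hr''⟩, rfl⟩
    exact ⟨addBody a r, ⟨r, hr, rfl⟩, wReductRule_addBody ▸ mem_image_of_mem _ hr''⟩

end ProgramOperations

noncomputable def choiceRule (p q : ℕ) : WRule :=
  ⟨⟨(1 : EReal), {(RElem.pos (Lit.pos p), (1 : ℝ)), (RElem.pos (Lit.pos q), (1 : ℝ))},
    (1 : EReal)⟩, []⟩

section OrProgram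

variable {X Z : Set Lit} {P Q : WProg} {p q : ℕ}

lemma orProg_eq (P Q : WProg) (p q : ℕ) :
    orProg P Q p q = addBody p '' P ∪ addBody q '' Q ∪ {choiceRule p q} := rfl

lemma orProg_comm (P Q : WProg) (p q : ℕ) : orProg P Q p q = orProg Q P q p := by
  rw [orProg_eq, orProg_eq, union_comm (addBody p '' P), choiceRule, choiceRule,
    Multiset.pair_comm]

lemma satWRule_choiceRule :
    SatWRule X (choiceRule p q) ↔ Xor (Lit.pos p ∈ X) (Lit.pos q ∈ X) := by
  simp only [SatWRule, choiceRule, SatWC, Multiset.insert_eq_cons, wval_cons, wval_singleton,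
    SatRE, List.not_mem_nil, IsEmpty.forall_iff, implies_true, forall_const]
  by_cases hp : Lit.pos p ∈ X <;> by_cases hq : Lit.pos q ∈ X <;> simp [hp, hq, Xor]
  norm_num

lemma satWProg_wReductRule_choiceRule :
    SatWProg Z (WReductRule X (choiceRule p q)) ↔
      (Lit.pos p ∈ X → Lit.pos p ∈ Z) ∧ (Lit.pos q ∈ X → Lit.pos q ∈ Z) := by
  simp [SatWProg, WReductRule, choiceRule, SatWRule, satWC_litWC, or_imp, forall_and]

lemma satWProg_orProg :
    SatWProg X (orProg P Q p q) ↔ (Lit.pos p ∈ X → SatWProg X P) ∧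
      (Lit.pos q ∈ X → SatWProg X Q) ∧ Xor (Lit.pos p ∈ X) (Lit.pos q ∈ X) := by
  rw [orProg_eq, satWProg_union, satWProg_union, satWProg_image_addBody, satWProg_image_addBody,
    satWProg_singleton, satWRule_choiceRule, and_assoc]

lemma satWProg_wReductProg_orProg :
    SatWProg Z (WReductProg X (orProg P Q p q)) ↔
      (Lit.pos p ∈ Z → SatWProg Z (WReductProg X P)) ∧
      (Lit.pos q ∈ Z → SatWProg Z (WReductProg X Q)) ∧
      (Lit.pos p ∈ X → Lit.pos p ∈ Z) ∧ (Lit.pos q ∈ X → Lit.pos q ∈ Z) := by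
  rw [orProg_eq, wReductProg_union, wReductProg_union, wReductProg_image_addBody,
    wReductProg_image_addBody, wReductProg_singleton, satWProg_union, satWProg_union,
    satWProg_image_addBody, satWProg_image_addBody, satWProg_wReductRule_choiceRule, and_assoc]

end OrProgram

lemma consistent_sdiff_pos_iff {Y : Set Lit} {a : ℕ} (ha : Lit.neg a ∉ Y) :
    Consistent (Y \ {Lit.pos a}) ↔ Consistent Y := by
  refine forall_congr' fun b => not_congr ?_
  by_cases hb : b = a
  · subst hb
    simp [ha]
  · simp [hb]

lemma answerSetW_orProg_iff {P Q : WProg} {p q : ℕ} {Y : Set Lit}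
    (hP : ∀ r ∈ P, r.Avoids (Lit.pos p))
    (hpY : Lit.pos p ∈ Y) (hqY : Lit.pos q ∉ Y) (hnY : Lit.neg p ∉ Y) :
    AnswerSetW Y (orProg P Q p q) ↔ AnswerSetW (Y \ {Lit.pos p}) P := by
  have hY : Y \ {Lit.pos p} = (Y \ {Lit.pos p}) \ {Lit.pos p} := sdiff_idem.symm
  have hsat : SatWProg Y (orProg P Q p q) ↔ SatWProg (Y \ {Lit.pos p}) P := by
    rw [satWProg_orProg, satWProg_congr hP hY]
    simp [hpY, hqY, Xor]
  have hred : ∀ Z ⊆ Y, SatWProg Z (WReductProg Y (orProg P Q p q)) ↔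
      Lit.pos p ∈ Z ∧ SatWProg (Z \ {Lit.pos p}) (WReductProg (Y \ {Lit.pos p}) P) := by
    intro Z hZ
    have hqZ : Lit.pos q ∉ Z := fun h => hqY (hZ h)
    rw [satWProg_wReductProg_orProg, satWProg_wReductProg_congr hP sdiff_idem.symm hY]
    simp only [hpY, hqY, hqZ, false_imp_iff, true_imp_iff, and_true]
    tauto
  refine and_congr (consistent_sdiff_pos_iff hnY).symm (and_congr hsat ?_)
  rw [← forall_ssubset_sdiff_singleton_iff hpY
    (R := fun W => ¬ SatWProg W (WReductProg (Y \ {Lit.pos p}) P))]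
  exact forall₂_congr fun Z hZ => by rw [hred Z hZ.1]; tauto

lemma orProg_head_ne_neg {P Q : WProg} {p q : ℕ}
    (hfresh : ∀ r ∈ P ∪ Q, r.Avoids (Lit.neg p)) :
    ∀ r ∈ orProg P Q p q, ∀ e ∈ r.head.S, reLit e.1 ≠ Lit.neg p := by
  rw [orProg_eq]
  rintro r ((⟨r₀, hr₀, rfl⟩ | ⟨r₀, hr₀, rfl⟩) | hr) e he
  · exact (hfresh r₀ (Or.inl hr₀)).1 e he
  · exact (hfresh r₀ (Or.inr hr₀)).1 e he
  · rw [mem_singleton_iff.1 hr] at he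
    simp only [choiceRule, Multiset.insert_eq_cons, Multiset.mem_cons, Multiset.mem_singleton] at he
    rcases he with rfl | rfl <;> simp [reLit]

lemma answerSetW_sdiff_of_answerSetW_orProg {P Q : WProg} {p q : ℕ} {Y : Set Lit}
    (hfresh : ∀ r ∈ P ∪ Q, p ∉ wruleAtoms r) (hY : AnswerSetW Y (orProg P Q p q))
    (hpY : Lit.pos p ∈ Y) : AnswerSetW (Y \ {Lit.pos p}) P := by
  have havoid := fun r hr => WRule.avoids_of_not_mem_wruleAtoms (hfresh r hr)
  have hqY : Lit.pos q ∉ Y := (xor_iff_iff_not.1 (satWProg_orProg.1 hY.2.1).2.2).1 hpY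
  have hnY : Lit.neg p ∉ Y :=
    not_mem_of_answerSetW hY (orProg_head_ne_neg fun r hr => (havoid r hr).2)
  exact (answerSetW_orProg_iff (fun r hr => (havoid r (Or.inl hr)).1) hpY hqY hnY).1 hY

lemma answerSetW_insert_orProg {P Q : WProg} {p q : ℕ} {X : Set Lit} (hpq : p ≠ q)
    (hfresh : ∀ r ∈ P, p ∉ wruleAtoms r ∧ q ∉ wruleAtoms r) (hX : AnswerSetW X P) :
    AnswerSetW (insert (Lit.pos p) X) (orProg P Q p q) := by
  have hpP := fun r hr => WRule.avoids_of_not_mem_wruleAtoms (hfresh r hr).1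
  have hqP := fun r hr => WRule.avoids_of_not_mem_wruleAtoms (hfresh r hr).2
  have hnot_mem : ∀ l, (∀ r ∈ P, r.Avoids l) → l ∉ X :=
    fun l hl => not_mem_of_answerSetW hX fun r hr => (hl r hr).1
  have hpX := hnot_mem _ fun r hr => (hpP r hr).1
  have hqY : Lit.pos q ∉ insert (Lit.pos p) X := by
    simp [hpq.symm, hnot_mem _ fun r hr => (hqP r hr).1]
  have hnY : Lit.neg p ∉ insert (Lit.pos p) X := by
    simp [hnot_mem _ fun r hr => (hpP r hr).2]
  rw [answerSetW_orProg_iff (fun r hr => (hpP r hr).1) (mem_insert _ _) hqY hnY,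
    insert_sdiff_self_of_notMem hpX]
  exact hX

theorem stmt19_general (P Q : WProg) (p q : ℕ) (hpq : p ≠ q)
    (hfresh : ∀ r ∈ P ∪ Q, p ∉ wruleAtoms r ∧ q ∉ wruleAtoms r) :
    (∃ Y : Set Lit, AnswerSetW Y (orProg P Q p q)) ↔
      ((∃ Y : Set Lit, AnswerSetW Y P) ∨ (∃ Y : Set Lit, AnswerSetW Y Q)) := by
  have hfresh' : ∀ r ∈ Q ∪ P, q ∉ wruleAtoms r ∧ p ∉ wruleAtoms r :=
    fun r hr => (hfresh r (union_comm Q P ▸ hr)).symm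
  constructor
  · rintro ⟨Y, hY⟩
    rcases (satWProg_orProg.1 hY.2.1).2.2 with ⟨hpY, -⟩ | ⟨hqY, -⟩
    · exact Or.inl
        ⟨_, answerSetW_sdiff_of_answerSetW_orProg (fun r hr => (hfresh r hr).1) hY hpY⟩
    · rw [orProg_comm] at hY
      exact Or.inr
        ⟨_, answerSetW_sdiff_of_answerSetW_orProg (fun r hr => (hfresh' r hr).1) hY hqY⟩
  · rintro (⟨X, hX⟩ | ⟨X, hX⟩)
    · exact ⟨_, answerSetW_insert_orProg hpq (fun r hr => hfresh r (Or.inl hr)) hX⟩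
    · rw [orProg_comm]
      exact ⟨_, answerSetW_insert_orProg hpq.symm (fun r hr => hfresh' r (Or.inl hr)) hX⟩

/-- or(P,Q) has an answer set iff at least one of P and Q does. -/
theorem stmt19 (P Q : WProg) (p q : ℕ) (hpq : p ≠ q)
    (hP : HeadPos P) (hQ : HeadPos Q)
    (hfresh : ∀ r ∈ P ∪ Q, p ∉ wruleAtoms r ∧ q ∉ wruleAtoms r) :
    (∃ Y : Set Lit, AnswerSetW Y (orProg P Q p q)) ↔
      ((∃ Y : Set Lit, AnswerSetW Y P) ∨ (∃ Y : Set Lit, AnswerSetW Y Q)) :=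
  stmt19_general P Q p q hpq hfresh
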